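/- arXiv:2401.11680 — 2 statements merged into one kernel-verified Lean document; each statement's English description precedes it below -/
import Mathlib

section
/- For any preference order σ ∈ {±1}^n, the maximal number of napkinless diners equals the maximal balance number over all bench collections: ν_max(σ) = max over bench collections β of b(β,σ). -/
namespace Napkin

variable {n q : ℕ}

/-- The napkin to the left of seat `s`; napkin `s` itself is the one to the right of
seat `s`, placed between seats `s` and `s + 1` around the circular table. -/
def leftNapkin (s : Fin n) : Fin n := ⟨((s : ℕ) + (n - 1)) % n, Nat.mod_lt _ s.pos⟩

/-- Process the diners `0, 1, …, n-1` in their arrival order.  Here `w i = j` means that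
diner `j` sits in seat `i` (so diner `j` sits in seat `w.symm j`), and `σ j = true`
means diner `j` prefers the napkin to their right.  Each diner takes their preferred
adjacent napkin if it is unclaimed, otherwise the other adjacent napkin if it is
unclaimed, and otherwise is napkinless.  The returned state consists of the set of
claimed napkins and the set of napkinless diners. -/
def dine (σ : Fin n → Bool) (w : Equiv.Perm (Fin n)) :
    Finset (Fin n) × Finset (Fin n) :=
  (List.finRange n).foldl
    (fun st j =>
      let s := w.symm j
      let pref := if σ j then s else leftNapkin s
      let other := if σ j then leftNapkin s else s
      if pref ∉ st.1 then (insert pref st.1, st.2)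
      else if other ∉ st.1 then (insert other st.1, st.2)
      else (st.1, insert j st.2))
    (∅, ∅)

/-- The set of napkinless diners for the seating arrangement `(w, σ)`. -/
def napkinless (σ : Fin n → Bool) (w : Equiv.Perm (Fin n)) : Finset (Fin n) :=
  (dine σ w).2

/-- `ν(w,σ)`, the number of napkinless diners. -/
def nu (σ : Fin n → Bool) (w : Equiv.Perm (Fin n)) : ℕ := (napkinless σ w).card

/-- A seating order puts diner `1` in seat `1` (index `0` here). -/
def IsSeating (w : Equiv.Perm (Fin n)) : Prop :=
  ∀ i : Fin n, (i : ℕ) = 0 → (w i : ℕ) = 0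

instance : DecidablePred (IsSeating (n := n)) := fun w =>
  decidable_of_iff (∀ i : Fin n, (i : ℕ) = 0 → (w i : ℕ) = 0) Iff.rfl

/-- `ν_max(σ)`, the maximal number of napkinless diners over all seating orders. -/
def nuMax (σ : Fin n → Bool) : ℕ :=
  (Finset.univ.filter fun w : Equiv.Perm (Fin n) => IsSeating w).sup (nu σ)

/-- The value `±1` of a napkin preference. -/
def sign (b : Bool) : ℤ := if b then 1 else -1

/-- The drift `h(σ) = max(0, max over prefixes of σ₁ + ⋯ + σᵢ)`. -/
def drift (σ : Fin n → Bool) : ℕ :=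
  (Finset.range (n + 1)).sup fun i =>
    (∑ j ∈ Finset.univ.filter (fun j : Fin n => (j : ℕ) < i), sign (σ j)).toNat

/-- A bench collection: `q` pairwise disjoint triples `aᵢ < bᵢ < cᵢ` in `{1,…,n}`. -/
structure BenchCollection (n q : ℕ) where
  a : Fin q → Fin n
  b : Fin q → Fin n
  c : Fin q → Fin n
  hab : ∀ i, a i < b i
  hbc : ∀ i, b i < c i
  disj : ∀ i j : Fin q, i ≠ j →
    Disjoint ({a i, b i, c i} : Finset (Fin n)) ({a j, b j, c j} : Finset (Fin n))

/-- A bench is balanced when its two smallest members have opposite preferences. -/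
def Balanced (σ : Fin n → Bool) (β : BenchCollection n q) (i : Fin q) : Prop :=
  sign (σ (β.a i)) + sign (σ (β.b i)) = 0

instance (σ : Fin n → Bool) (β : BenchCollection n q) :
    DecidablePred (Balanced σ β) := fun i =>
  decidable_of_iff (sign (σ (β.a i)) + sign (σ (β.b i)) = 0) Iff.rfl

/-- `b(β,σ)`, the number of balanced benches of `β`. -/
def balance (σ : Fin n → Bool) (β : BenchCollection n q) : ℕ :=
  (Finset.univ.filter fun i => Balanced σ β i).card


/-!
A balanced bench `{a < b < c}` can starve `c`: put whichever of `a, b` prefers the right napkin,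
then `c`, then the other one, in three consecutive seats. Both neighbours of `c` arrive before
`c`, and each takes its preferred napkin, which is one of the two napkins of `c` and is contested
only by `c`. Seating all benches in disjoint blocks of seats gives `b(β, σ) ≤ ν_max(σ)`.

Conversely, both napkins of a napkinless diner `z` were taken earlier by its two neighbours. If
the left neighbour prefers the left napkin, that napkin was taken still earlier by the next diner
to the left, as its right napkin; following this run of right-takers leftwards while they prefer
the left napkin, one finds two consecutive diners `x < y` of the run with opposite preferences.
Symmetrically on the right; and if neither neighbour prefers the napkin away from `z`, the two
neighbours themselves have opposite preferences. A diner lies in the run of at most one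
napkinless diner, so the triples `{x, y, z}` are disjoint; completed by arbitrary triples they
form a bench collection with at least `ν(w, σ)` balanced benches.
-/

open Finset Function

lemma leftNapkin_eq_sub_one [NeZero n] (s : Fin n) : leftNapkin s = s - 1 := by
  rw [eq_sub_iff_add_eq]
  ext
  simp only [leftNapkin, Fin.val_add, Fin.val_one', Nat.add_mod_mod, Nat.mod_add_mod]
  rw [add_assoc, Nat.sub_add_cancel (Nat.one_le_iff_ne_zero.mpr (NeZero.ne n)),
    Nat.add_mod_right, Nat.mod_eq_of_lt s.isLt]

lemma sub_one_ne_self [NeZero n] (hn : 1 < n) (s : Fin n) : s - 1 ≠ s := by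
  intro h
  have h1 : ((1 : Fin n) : ℕ) = 0 := by simpa using congrArg Fin.val (sub_eq_self.mp h)
  rw [Fin.val_one', Nat.mod_eq_of_lt hn] at h1
  exact one_ne_zero h1

lemma exists_perm_apply_eq {ι α : Type*} [Finite α] {f g : ι → α} (hf : Injective f)
    (hg : Injective g) : ∃ u : Equiv.Perm α, ∀ i, u (f i) = g i := by
  classical
  let e : Set.range f ≃ Set.range g := (Equiv.ofInjective f hf).symm.trans (Equiv.ofInjective g hg)
  refine ⟨e.extendSubtype, fun i => ?_⟩
  rw [Equiv.extendSubtype_apply_of_mem e (f i) ⟨i, rfl⟩]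
  simp [e]

lemma eq_and_eq_of_triple_eq {α : Type*} [LinearOrder α] {a b c x y z : α} (hab : a < b)
    (hbc : b < c) (hxy : x < y) (hyz : y < z) (h : ({a, b, c} : Finset α) = {x, y, z}) :
    a = x ∧ b = y := by
  have hcard : ({x, y, z} : Finset α).card = 3 :=
    card_eq_three.mpr ⟨x, y, z, hxy.ne, (hxy.trans hyz).ne, hyz.ne, rfl⟩
  have sorted (u v w : α) (huv : u < v) (hvw : v < w) (hs : {u, v, w} = ({x, y, z} : Finset α)) :
      ![u, v, w] = orderEmbOfFin _ hcard :=
    orderEmbOfFin_unique hcard (fun i => by fin_cases i <;> simp [← hs])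
      (Fin.strictMono_iff_lt_succ.mpr fun i => by fin_cases i <;> simpa)
  have := (sorted a b c hab hbc h).trans (sorted x y z hxy hyz rfl).symm
  exact ⟨congrFun this 0, congrFun this 1⟩

lemma injective_vecCons_three {α : Type*} {x y z : α} (hxy : x ≠ y) (hxz : x ≠ z) (hyz : y ≠ z) :
    Injective ![x, y, z] := by
  intro i j h
  fin_cases i <;> fin_cases j <;> simp_all [eq_comm]

lemma injective_of_mem_of_pairwiseDisjoint {ι κ α : Type*} {S : ι → Finset α}
    (hS : Pairwise (Disjoint on S)) {g : κ → ι} {f : κ → α} (hf : ∀ z, f z ∈ S (g z))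
    (hg : ∀ z z', g z = g z' → f z = f z' → z = z') : Injective f := by
  intro z z' h
  by_cases hzz : g z = g z'
  · exact hg z z' hzz h
  · exact (disjoint_left.mp (hS hzz) (hf z) (h ▸ hf z')).elim

lemma insert_orderEmbOfFin_three {α : Type*} [LinearOrder α] (s : Finset α) (h : s.card = 3) :
    ({s.orderEmbOfFin h 0, s.orderEmbOfFin h 1, s.orderEmbOfFin h 2} : Finset α) = s := by
  have hne {i j : Fin 3} (hij : i ≠ j) : s.orderEmbOfFin h i ≠ s.orderEmbOfFin h j :=
    (s.orderEmbOfFin h).injective.ne hij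
  refine eq_of_subset_of_card_le (by simp [insert_subset_iff]) ?_
  rw [h, card_eq_three.mpr ⟨_, _, _, hne (by decide), hne (by decide), hne (by decide), rfl⟩]

/-- Sides are encoded by `Bool` as in `σ`: `true` is the right. -/
def sideNapkin (b : Bool) (s : Fin n) : Fin n := if b then s else leftNapkin s

@[simp] lemma sideNapkin_true (s : Fin n) : sideNapkin true s = s := rfl

@[simp] lemma sideNapkin_false [NeZero n] (s : Fin n) : sideNapkin false s = s - 1 :=
  leftNapkin_eq_sub_one s

lemma sideNapkin_ne_sideNapkin_not [NeZero n] (hn : 1 < n) (b : Bool) (s : Fin n) :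
    sideNapkin b s ≠ sideNapkin (!b) s := by
  cases b <;> simp [sub_one_ne_self hn s, (sub_one_ne_self hn s).symm]

def neighbor [NeZero n] (b : Bool) (s : Fin n) : Fin n := if b then s + 1 else s - 1

lemma neighbor_injective [NeZero n] (b : Bool) : Injective (neighbor (n := n) b) := by
  cases b
  · exact sub_left_injective
  · exact add_left_injective 1

lemma sideNapkin_neighbor [NeZero n] {b c : Bool} (hcb : c ≠ b) (s : Fin n) :
    sideNapkin c (neighbor b s) = sideNapkin b s := by
  cases b <;> cases c <;> simp_all [neighbor]

lemma eq_neighbor_of_sideNapkin_eq [NeZero n] {b c : Bool} {s t : Fin n}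
    (h : sideNapkin c t = sideNapkin b s) (hts : t ≠ s) : c = !b ∧ t = neighbor b s := by
  cases b <;> cases c <;> simp only [sideNapkin_true, sideNapkin_false] at h
  · exact absurd (sub_left_injective h) hts
  · exact ⟨rfl, h⟩
  · exact ⟨rfl, by simp [neighbor, ← h]⟩
  · exact absurd h hts

/-! ### The dining process -/

section Dining

variable (σ : Fin n → Bool) (w : Equiv.Perm (Fin n))

def step (st : Finset (Fin n) × Finset (Fin n)) (j : Fin n) :
    Finset (Fin n) × Finset (Fin n) :=
  let s := w.symm j
  let pref := if σ j then s else leftNapkin s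
  let other := if σ j then leftNapkin s else s
  if pref ∉ st.1 then (insert pref st.1, st.2)
  else if other ∉ st.1 then (insert other st.1, st.2)
  else (st.1, insert j st.2)

def stateAt (t : ℕ) : Finset (Fin n) × Finset (Fin n) :=
  ((List.finRange n).take t).foldl (step σ w) (∅, ∅)

def claimed (t : ℕ) : Finset (Fin n) := (stateAt σ w t).1

def took (j : Fin n) : Option (Fin n) :=
  if sideNapkin (σ j) (w.symm j) ∉ claimed σ w j then some (sideNapkin (σ j) (w.symm j))
  else if sideNapkin (!σ j) (w.symm j) ∉ claimed σ w j then some (sideNapkin (!σ j) (w.symm j))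
  else none

lemma dine_eq_stateAt : dine σ w = stateAt σ w n := by
  rw [stateAt, List.take_of_length_le (by simp)]
  rfl

lemma step_stateAt (j : Fin n) :
    step σ w (stateAt σ w j) j =
      match took σ w j with
      | some m => (insert m (claimed σ w j), (stateAt σ w j).2)
      | none => (claimed σ w j, insert j (stateAt σ w j).2) := by
  unfold step took claimed sideNapkin
  cases σ j <;> simp only [Bool.not_false, Bool.not_true, Bool.false_eq_true, if_true, if_false] <;>
    split_ifs <;> rfl

lemma stateAt_succ {t : ℕ} (ht : t < n) :
    stateAt σ w (t + 1) =
      match took σ w ⟨t, ht⟩ with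
      | some m => (insert m (claimed σ w t), (stateAt σ w t).2)
      | none => (claimed σ w t, insert ⟨t, ht⟩ (stateAt σ w t).2) := by
  refine Eq.trans ?_ (step_stateAt σ w ⟨t, ht⟩)
  rw [stateAt, List.take_add_one, List.getElem?_eq_getElem (by simpa using ht)]
  simp [stateAt]

lemma mem_claimed_iff {t : ℕ} (ht : t ≤ n) (m : Fin n) :
    m ∈ claimed σ w t ↔ ∃ j : Fin n, (j : ℕ) < t ∧ took σ w j = some m := by
  induction t with
  | zero => simp [claimed, stateAt]
  | succ t ih =>
    have hlt : t < n := ht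
    have hj : ∀ j : Fin n, (j : ℕ) < t + 1 ↔ (j : ℕ) < t ∨ j = ⟨t, hlt⟩ := fun j => by
      rw [Fin.ext_iff]; exact Nat.lt_succ_iff_lt_or_eq
    simp only [hj, or_and_right, exists_or, exists_eq_left, ← ih hlt.le]
    rw [claimed, stateAt_succ σ w hlt]
    cases took σ w ⟨t, hlt⟩ <;> simp [claimed, eq_comm, or_comm]

lemma mem_stateAt_snd_iff {t : ℕ} (ht : t ≤ n) (j : Fin n) :
    j ∈ (stateAt σ w t).2 ↔ (j : ℕ) < t ∧ took σ w j = none := by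
  induction t with
  | zero => simp [stateAt]
  | succ t ih =>
    have hlt : t < n := ht
    have hj : (j : ℕ) < t + 1 ↔ (j : ℕ) < t ∨ j = ⟨t, hlt⟩ := by
      rw [Fin.ext_iff]; exact Nat.lt_succ_iff_lt_or_eq
    rw [hj, or_and_right, ← ih hlt.le, stateAt_succ σ w hlt]
    rcases h : took σ w ⟨t, hlt⟩ <;> by_cases hjt : j = ⟨t, hlt⟩ <;> simp_all

lemma mem_napkinless_iff (j : Fin n) : j ∈ napkinless σ w ↔ took σ w j = none := by
  rw [napkinless, dine_eq_stateAt, mem_stateAt_snd_iff σ w le_rfl]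
  simp

end Dining

section Taking

variable {σ : Fin n → Bool} {w : Equiv.Perm (Fin n)}

lemma took_eq_some_of_not_mem {j : Fin n} (h : sideNapkin (σ j) (w.symm j) ∉ claimed σ w j) :
    took σ w j = some (sideNapkin (σ j) (w.symm j)) := by
  simp [took, h]

lemma took_eq_none_iff {j : Fin n} :
    took σ w j = none ↔ ∀ b, sideNapkin b (w.symm j) ∈ claimed σ w j := by
  unfold took
  cases σ j <;> split_ifs <;> simp_all [Bool.forall_bool]

lemma exists_sideNapkin_of_took_eq_some {j m : Fin n} (h : took σ w j = some m) :
    ∃ b, m = sideNapkin b (w.symm j) := by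
  unfold took at h
  split_ifs at h <;> cases h <;> exact ⟨_, rfl⟩

lemma mem_claimed_of_took_eq_some {j m : Fin n} (h : took σ w j = some m) {t : ℕ}
    (hjt : (j : ℕ) < t) (ht : t ≤ n) : m ∈ claimed σ w t :=
  (mem_claimed_iff σ w ht m).2 ⟨j, hjt, h⟩

variable (σ w) in
def Takes (j : Fin n) (b : Bool) : Prop := took σ w j = some (sideNapkin b (w.symm j))

lemma Takes.not_mem_napkinless {j : Fin n} {b : Bool} (h : Takes σ w j b) :
    j ∉ napkinless σ w := by
  rw [mem_napkinless_iff, h]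
  exact Option.some_ne_none _

variable [NeZero n]

lemma exists_takes_of_mem_claimed {x : Fin n} {b : Bool}
    (h : sideNapkin b (w.symm x) ∈ claimed σ w x) :
    ∃ y < x, w.symm y = neighbor b (w.symm x) ∧ Takes σ w y (!b) := by
  obtain ⟨y, hy, hty⟩ := (mem_claimed_iff σ w x.isLt.le _).1 h
  obtain ⟨c, hc⟩ := exists_sideNapkin_of_took_eq_some hty
  obtain ⟨rfl, hs⟩ := eq_neighbor_of_sideNapkin_eq hc.symm (w.symm.injective.ne (Fin.ne_of_lt hy))
  exact ⟨y, hy, hs, by rwa [hc] at hty⟩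

lemma sideNapkin_not_mem_claimed {x : Fin n} {b : Bool} (h : x < w (neighbor b (w.symm x))) :
    sideNapkin b (w.symm x) ∉ claimed σ w x := fun hm => by
  obtain ⟨y, hy, hs, -⟩ := exists_takes_of_mem_claimed hm
  rw [← hs, Equiv.apply_symm_apply] at h
  exact lt_asymm h hy

lemma mem_napkinless_of_between {p c m : Fin n} (hp : σ p = true) (hm : σ m = false)
    (hpc : p < c) (hmc : m < c) (hcp : w.symm c = neighbor true (w.symm p))
    (hcm : w.symm c = neighbor false (w.symm m)) : c ∈ napkinless σ w := by
  have takes_p : took σ w p = some (sideNapkin true (w.symm p)) :=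
    hp ▸ took_eq_some_of_not_mem (sideNapkin_not_mem_claimed (by
      rw [hp, ← hcp, Equiv.apply_symm_apply]; exact hpc))
  have takes_m : took σ w m = some (sideNapkin false (w.symm m)) :=
    hm ▸ took_eq_some_of_not_mem (sideNapkin_not_mem_claimed (by
      rw [hm, ← hcm, Equiv.apply_symm_apply]; exact hmc))
  rw [mem_napkinless_iff, took_eq_none_iff]
  intro b
  cases b
  · rw [hcp, sideNapkin_neighbor Bool.false_ne_true]
    exact mem_claimed_of_took_eq_some takes_p hpc c.isLt.le
  · rw [hcm, sideNapkin_neighbor Bool.false_ne_true.symm]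
    exact mem_claimed_of_took_eq_some takes_m hmc c.isLt.le

end Taking

/-! ### Starving the balanced benches -/

lemma exists_seating_of_injective [NeZero n] {k : ℕ} {f : Fin k × Fin 3 → Fin n}
    (hf : Injective f) :
    ∃ w : Equiv.Perm (Fin n), IsSeating w ∧ ∀ i,
      w.symm (f (i, 1)) = neighbor true (w.symm (f (i, 0))) ∧
      w.symm (f (i, 1)) = neighbor false (w.symm (f (i, 2))) := by
  have hk : k * 3 ≤ n := by simpa using Fintype.card_le_of_injective f hf
  have hlt : ∀ (i : Fin k) (d : Fin 3), 3 * (i : ℕ) + d < n := fun i d => by omega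
  let g : Fin k × Fin 3 → Fin n := fun z => ⟨3 * z.1 + z.2, hlt z.1 z.2⟩
  have hg : Injective g := by
    rintro ⟨i, d⟩ ⟨i', d'⟩ h
    simp only [g, Fin.mk.injEq] at h
    rw [Prod.mk.injEq, Fin.ext_iff, Fin.ext_iff]
    omega
  have hg_succ : ∀ i, g (i, 1) = g (i, 0) + 1 ∧ g (i, 2) = g (i, 1) + 1 := fun i => by
    constructor <;> ext <;> rw [Fin.val_add_one_of_lt'] <;> simp [g] <;> omega
  obtain ⟨u, hu⟩ := exists_perm_apply_eq hf hg
  let v := u.trans (Equiv.subRight (u 0))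
  refine ⟨v.symm, fun i hi => ?_, fun i => ?_⟩
  · obtain rfl : i = 0 := Fin.ext hi
    rw [v.symm_apply_eq.mpr (sub_self (u 0)).symm]
    rfl
  · simp only [Equiv.symm_symm, v, Equiv.trans_apply, Equiv.subRight_apply, hu, neighbor,
      if_true, Bool.false_eq_true, if_false, (hg_succ i).1, (hg_succ i).2]
    constructor <;> abel

lemma balanced_iff {σ : Fin n → Bool} {β : BenchCollection n q} {i : Fin q} :
    Balanced σ β i ↔ σ (β.a i) ≠ σ (β.b i) := by
  unfold Balanced sign
  cases σ (β.a i) <;> cases σ (β.b i) <;> decide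

namespace BenchCollection

variable (β : BenchCollection n q)

def bench (i : Fin q) : Finset (Fin n) := {β.a i, β.b i, β.c i}

lemma pairwise_disjoint_bench : Pairwise (Disjoint on β.bench) := fun i j h => β.disj i j h

lemma c_injective : Injective β.c :=
  injective_of_mem_of_pairwiseDisjoint β.pairwise_disjoint_bench (g := id)
    (fun i => by simp [bench]) (fun _ _ h _ => h)

/-- When bench `i` is balanced, the member preferring the right napkin comes first. -/
def seatingOrder (σ : Fin n → Bool) (i : Fin q) : Fin 3 → Fin n :=
  if σ (β.a i) then ![β.a i, β.c i, β.b i] else ![β.b i, β.c i, β.a i]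

lemma seatingOrder_injective (σ : Fin n → Bool) :
    Injective fun z : Fin q × Fin 3 => β.seatingOrder σ z.1 z.2 := by
  refine injective_of_mem_of_pairwiseDisjoint β.pairwise_disjoint_bench (g := Prod.fst)
    (fun ⟨i, d⟩ => ?_) ?_
  · unfold seatingOrder
    split_ifs <;> fin_cases d <;> simp [bench]
  · rintro ⟨i, d⟩ ⟨i', d'⟩ (rfl : i = i') (hd : β.seatingOrder σ i d = β.seatingOrder σ i d')
    have hab := β.hab i
    have hbc := β.hbc i
    have hinj : Injective (β.seatingOrder σ i) := by
      unfold seatingOrder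
      split_ifs
      · exact injective_vecCons_three (hab.trans hbc).ne hab.ne hbc.ne'
      · exact injective_vecCons_three hbc.ne hab.ne' (hab.trans hbc).ne'
    rw [hinj hd]

end BenchCollection

lemma balance_le_nuMax (σ : Fin n → Bool) (β : BenchCollection n q) :
    balance σ β ≤ nuMax σ := by
  rcases isEmpty_or_nonempty (Fin q) with hq | ⟨⟨i₀⟩⟩
  · simp [balance]
  have : NeZero n := NeZero.of_pos (β.a i₀).pos
  obtain ⟨w, hw, hseat⟩ := exists_seating_of_injective (β.seatingOrder_injective σ)
  have hc : ∀ i, Balanced σ β i → β.c i ∈ napkinless σ w := fun i hi => by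
    have hab := β.hab i
    have hbc := β.hbc i
    have hσ := balanced_iff.mp hi
    have := hseat i
    simp only [BenchCollection.seatingOrder] at this
    split_ifs at this with ha
    · exact mem_napkinless_of_between ha (by simpa [ha] using hσ.symm) (hab.trans hbc) hbc
        (by simpa using this.1) (by simpa using this.2)
    · exact mem_napkinless_of_between (by simpa [ha] using hσ.symm) (by simpa using ha) hbc
        (hab.trans hbc) (by simpa using this.1) (by simpa using this.2)
  calc balance σ β ≤ (napkinless σ w).card :=
        card_le_card_of_injOn β.c (fun i hi => hc i (mem_filter.mp hi).2) β.c_injective.injOn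
    _ ≤ nuMax σ := le_sup (f := nu σ) (mem_filter.mpr ⟨mem_univ w, hw⟩)

/-! ### Runs blocking a napkinless diner -/

lemma one_lt_of_mem_napkinless {σ : Fin n → Bool} {w : Equiv.Perm (Fin n)} {j : Fin n}
    (hj : j ∈ napkinless σ w) : 1 < n := by
  rw [mem_napkinless_iff, took_eq_none_iff] at hj
  obtain ⟨y, hy, -⟩ := (mem_claimed_iff σ w j.isLt.le _).1 (hj true)
  omega

section Runs

variable {σ : Fin n → Bool} {w : Equiv.Perm (Fin n)} [NeZero n]

lemma Takes.unique (hn : 1 < n) {x : Fin n} {b c : Bool} (hb : Takes σ w x b)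
    (hc : Takes σ w x c) : b = c := by
  have h := Option.some_inj.mp (hb.symm.trans hc)
  by_contra hbc
  obtain rfl : c = !b := by cases b <;> cases c <;> simp_all
  exact sideNapkin_ne_sideNapkin_not hn b _ h

variable (w) in
def sideDiner (b : Bool) (j : Fin n) (d : ℕ) : Fin n := w ((neighbor b)^[d] (w.symm j))

variable (σ w) in
/-- The `d` diners next to `j` on side `b` all took the napkin on the side facing `j`. -/
def RunTo (b : Bool) (j : Fin n) (d : ℕ) : Prop :=
  ∀ e, 0 < e → e ≤ d → Takes σ w (sideDiner w b j e) (!b)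

variable (σ w) in
def Blocks (x j : Fin n) : Prop :=
  ∃ b d, 0 < d ∧ x = sideDiner w b j d ∧ RunTo σ w b j d

lemma Blocks.not_mem_napkinless {x j : Fin n} (h : Blocks σ w x j) : x ∉ napkinless σ w := by
  obtain ⟨b, d, hd, rfl, hrun⟩ := h
  exact (hrun d hd le_rfl).not_mem_napkinless

lemma runTo_one {j : Fin n} (hj : j ∈ napkinless σ w) (b : Bool) :
    sideDiner w b j 1 < j ∧ RunTo σ w b j 1 := by
  rw [mem_napkinless_iff, took_eq_none_iff] at hj
  obtain ⟨y, hy, hseat, htakes⟩ := exists_takes_of_mem_claimed (hj b)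
  have hyj : sideDiner w b j 1 = y := by
    rw [sideDiner, Function.iterate_one, ← hseat, Equiv.apply_symm_apply]
  refine ⟨hyj ▸ hy, fun e he he1 => ?_⟩
  obtain rfl : e = 1 := by omega
  rwa [hyj]

/-- A member of the run who did not get the napkin they preferred was beaten to it by the next
diner of the run, who arrived earlier. -/
lemma RunTo.succ (hn : 1 < n) {b : Bool} {j : Fin n} {d : ℕ} (hrun : RunTo σ w b j d)
    (hd : 0 < d) (hσ : σ (sideDiner w b j d) = b) :
    sideDiner w b j (d + 1) < sideDiner w b j d ∧ RunTo σ w b j (d + 1) := by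
  set x := sideDiner w b j d
  have hx : Takes σ w x (!b) := hrun d hd le_rfl
  have hpref : sideNapkin b (w.symm x) ∈ claimed σ w x := by
    by_contra hfree
    have := (hσ ▸ took_eq_some_of_not_mem (hσ.symm ▸ hfree)).symm.trans hx
    exact sideNapkin_ne_sideNapkin_not hn b _ (Option.some_inj.mp this)
  obtain ⟨y, hy, hseat, htakes⟩ := exists_takes_of_mem_claimed hpref
  have hyd : sideDiner w b j (d + 1) = y := by
    rw [← w.apply_symm_apply y, hseat]
    simp only [x, sideDiner, Function.iterate_succ_apply', Equiv.symm_apply_apply]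
  refine ⟨hyd ▸ hy, fun e he hed => ?_⟩
  rcases Nat.lt_succ_iff_lt_or_eq.mp (Nat.lt_succ_of_le hed) with hed | rfl
  · exact hrun e he (Nat.lt_succ_iff.mp hed)
  · rwa [hyd]

lemma RunTo.exists_opposite_pair (hn : 1 < n) {b : Bool} {j : Fin n} {d : ℕ}
    (hrun : RunTo σ w b j d) (hd : 0 < d) (hσ : σ (sideDiner w b j d) = b) :
    ∃ x y, x < y ∧ y ≤ sideDiner w b j d ∧ σ x ≠ σ y ∧ Blocks σ w x j ∧ Blocks σ w y j := by
  induction hx : sideDiner w b j d using WellFoundedLT.induction generalizing d with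
  | ind x ih =>
  subst hx
  obtain ⟨hlt, hrun'⟩ := hrun.succ hn hd hσ
  by_cases hσ' : σ (sideDiner w b j (d + 1)) = b
  · obtain ⟨p, z, hpz, hz, hne, hp, hz'⟩ := ih _ hlt hrun' d.succ_pos hσ' rfl
    exact ⟨p, z, hpz, hz.trans hlt.le, hne, hp, hz'⟩
  · exact ⟨_, _, hlt, le_rfl, fun h => hσ' (h.trans hσ), ⟨b, d + 1, d.succ_pos, rfl, hrun'⟩,
      ⟨b, d, hd, rfl, hrun⟩⟩

lemma exists_blocking_pair {j : Fin n} (hj : j ∈ napkinless σ w) :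
    ∃ x y, x < y ∧ y < j ∧ σ x ≠ σ y ∧ Blocks σ w x j ∧ Blocks σ w y j := by
  have hn := one_lt_of_mem_napkinless hj
  obtain ⟨hu, hrun_u⟩ := runTo_one hj false
  obtain ⟨hv, hrun_v⟩ := runTo_one hj true
  by_cases hσu : σ (sideDiner w false j 1) = false
  · obtain ⟨x, y, hxy, hy, hσ, hx, hy'⟩ := hrun_u.exists_opposite_pair hn one_pos hσu
    exact ⟨x, y, hxy, hy.trans_lt hu, hσ, hx, hy'⟩
  by_cases hσv : σ (sideDiner w true j 1) = true
  · obtain ⟨x, y, hxy, hy, hσ, hx, hy'⟩ := hrun_v.exists_opposite_pair hn one_pos hσv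
    exact ⟨x, y, hxy, hy.trans_lt hv, hσ, hx, hy'⟩
  have hσ : σ (sideDiner w false j 1) ≠ σ (sideDiner w true j 1) := by simp_all
  have hbu : Blocks σ w (sideDiner w false j 1) j := ⟨false, 1, one_pos, rfl, hrun_u⟩
  have hbv : Blocks σ w (sideDiner w true j 1) j := ⟨true, 1, one_pos, rfl, hrun_v⟩
  rcases lt_or_gt_of_ne (ne_of_apply_ne σ hσ) with h | h
  · exact ⟨_, _, h, hv, hσ, hbu, hbv⟩
  · exact ⟨_, _, h, hu, hσ.symm, hbv, hbu⟩

lemma eq_of_sideDiner_eq {b : Bool} {j j' : Fin n} {d d' : ℕ} (hj : j ∈ napkinless σ w)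
    (hdd : d ≤ d') (hrun : RunTo σ w b j' d') (h : sideDiner w b j d = sideDiner w b j' d') :
    j = j' := by
  have hseat : w.symm j = (neighbor b)^[d' - d] (w.symm j') := by
    apply (neighbor_injective b).iterate d
    rw [← Function.iterate_add_apply, Nat.add_sub_cancel' hdd]
    exact w.injective h
  rcases Nat.eq_zero_or_pos (d' - d) with h0 | hpos
  · rw [h0, Function.iterate_zero_apply] at hseat
    exact w.symm.injective hseat
  · have := hrun (d' - d) hpos (Nat.sub_le d' d)
    rw [sideDiner, ← hseat, Equiv.apply_symm_apply] at this
    exact absurd hj this.not_mem_napkinless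

lemma eq_of_blocks {x j j' : Fin n} (hj : j ∈ napkinless σ w) (hj' : j' ∈ napkinless σ w)
    (h : Blocks σ w x j) (h' : Blocks σ w x j') : j = j' := by
  obtain ⟨b, d, hd, rfl, hrun⟩ := h
  obtain ⟨b', d', hd', hx, hrun'⟩ := h'
  obtain rfl : b = b' := by
    have := (hrun' d' hd' le_rfl)
    rw [← hx] at this
    simpa using (hrun d hd le_rfl).unique (one_lt_of_mem_napkinless hj) this
  rcases le_total d d' with hdd | hdd
  · exact eq_of_sideDiner_eq hj hdd hrun' hx
  · exact (eq_of_sideDiner_eq hj' hdd hrun hx.symm).symm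

lemma disjoint_of_blocks {s s' : Finset (Fin n)} {j j' : Fin n} (hj : j ∈ napkinless σ w)
    (hj' : j' ∈ napkinless σ w) (hne : j ≠ j') (hs : ∀ t ∈ s, t = j ∨ Blocks σ w t j)
    (hs' : ∀ t ∈ s', t = j' ∨ Blocks σ w t j') : Disjoint s s' := by
  refine disjoint_left.mpr fun t ht ht' => hne ?_
  rcases hs t ht with rfl | hb <;> rcases hs' t ht' with rfl | hb'
  · rfl
  · exact absurd hj hb'.not_mem_napkinless
  · exact absurd hj' hb.not_mem_napkinless
  · exact eq_of_blocks hj hj' hb hb'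

end Runs

/-! ### Bench collections from disjoint triples -/

def IsBalancedTriple (σ : Fin n → Bool) (s : Finset (Fin n)) : Prop :=
  ∃ x y z, x < y ∧ y < z ∧ σ x ≠ σ y ∧ s = {x, y, z}

lemma IsBalancedTriple.card_eq {σ : Fin n → Bool} {s : Finset (Fin n)}
    (h : IsBalancedTriple σ s) : s.card = 3 := by
  obtain ⟨x, y, z, hxy, hyz, -, rfl⟩ := h
  exact card_eq_three.mpr ⟨x, y, z, hxy.ne, (hxy.trans hyz).ne, hyz.ne, rfl⟩

/-- The triples are the napkinless diners `z`, each with a pair of diners blocking it. -/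
lemma exists_balancedTriples (σ : Fin n → Bool) (w : Equiv.Perm (Fin n)) :
    ∃ 𝒮 : Finset (Finset (Fin n)), 𝒮.card = nu σ w ∧
      (𝒮 : Set (Finset (Fin n))).PairwiseDisjoint id ∧ ∀ s ∈ 𝒮, IsBalancedTriple σ s := by
  rcases isEmpty_or_nonempty (Fin n) with hn | ⟨⟨j₀⟩⟩
  · exact ⟨∅, by simp [nu, eq_empty_of_isEmpty (napkinless σ w)], by simp, by simp⟩
  have : NeZero n := NeZero.of_pos j₀.pos
  have hpair (j : Fin n) : ∃ x y, j ∈ napkinless σ w →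
      x < y ∧ y < j ∧ σ x ≠ σ y ∧ Blocks σ w x j ∧ Blocks σ w y j := by
    by_cases hj : j ∈ napkinless σ w
    · obtain ⟨x, y, h⟩ := exists_blocking_pair hj
      exact ⟨x, y, fun _ => h⟩
    · exact ⟨j, j, fun h => absurd h hj⟩
  choose X Y hXY using hpair
  let T (j : Fin n) : Finset (Fin n) := {X j, Y j, j}
  have hT : ∀ j ∈ napkinless σ w, ∀ t ∈ T j, t = j ∨ Blocks σ w t j := by
    intro j hj t ht
    simp only [T, mem_insert, mem_singleton] at ht
    rcases ht with rfl | rfl | rfl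
    exacts [Or.inr (hXY j hj).2.2.2.1, Or.inr (hXY j hj).2.2.2.2, Or.inl rfl]
  have hdisj : ∀ j ∈ napkinless σ w, ∀ j' ∈ napkinless σ w, j ≠ j' → Disjoint (T j) (T j') :=
    fun j hj j' hj' hne => disjoint_of_blocks hj hj' hne (hT j hj) (hT j' hj')
  have hT_inj : Set.InjOn T (napkinless σ w) := fun j hj j' hj' h => by
    by_contra hne
    have hjT : j ∈ T j := by simp [T]
    exact disjoint_left.mp (hdisj j hj j' hj' hne) hjT (h ▸ hjT)
  refine ⟨(napkinless σ w).image T, card_image_of_injOn hT_inj, ?_, ?_⟩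
  · rintro _ hs _ hs' hne
    obtain ⟨j, hj, rfl⟩ := mem_image.mp hs
    obtain ⟨j', hj', rfl⟩ := mem_image.mp hs'
    exact hdisj j hj j' hj' fun h => hne (congrArg T h)
  · intro s hs
    obtain ⟨j, hj, rfl⟩ := mem_image.mp hs
    obtain ⟨hxy, hyj, hσ, -⟩ := hXY j hj
    exact ⟨X j, Y j, j, hxy, hyj, hσ, rfl⟩

section Triples

variable {𝒮 : Finset (Finset (Fin n))}

lemma card_biUnion_triples (h3 : ∀ s ∈ 𝒮, s.card = 3)
    (hdisj : (𝒮 : Set (Finset (Fin n))).PairwiseDisjoint id) :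
    (𝒮.biUnion id).card = 3 * 𝒮.card := by
  rw [card_biUnion hdisj, sum_congr rfl fun s hs => (h3 s hs : (id s).card = 3), sum_const,
    smul_eq_mul, mul_comm]

lemma exists_triples_superset {m : ℕ} (hm : 3 * m ≤ n) (hcard : 𝒮.card ≤ m)
    (h3 : ∀ s ∈ 𝒮, s.card = 3) (hdisj : (𝒮 : Set (Finset (Fin n))).PairwiseDisjoint id) :
    ∃ 𝒯 : Finset (Finset (Fin n)), 𝒮 ⊆ 𝒯 ∧ 𝒯.card = m ∧ (∀ s ∈ 𝒯, s.card = 3) ∧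
      (𝒯 : Set (Finset (Fin n))).PairwiseDisjoint id := by
  obtain ⟨k, hk⟩ := Nat.exists_eq_add_of_le hcard
  induction k generalizing 𝒮 with
  | zero => exact ⟨𝒮, subset_rfl, hk.symm, h3, hdisj⟩
  | succ k ih =>
    have hU : 3 ≤ (𝒮.biUnion id)ᶜ.card := by
      rw [card_compl, card_biUnion_triples h3 hdisj, Fintype.card_fin]
      omega
    obtain ⟨t, ht, htcard⟩ := exists_subset_card_eq hU
    have ht_disj : ∀ s ∈ 𝒮, Disjoint t s := fun s hs =>
      disjoint_of_subset_left ht (disjoint_compl_left.mono_right (subset_biUnion_of_mem id hs))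
    have ht_notMem : t ∉ 𝒮 := fun h => by
      simp [disjoint_self.mp (ht_disj t h)] at htcard
    obtain ⟨𝒯, hsub, h𝒯⟩ := ih (𝒮 := insert t 𝒮)
      (by rw [card_insert_of_notMem ht_notMem]; omega)
      (by simpa [htcard] using h3)
      (by
        rw [coe_insert]
        exact hdisj.insert fun s hs _ => ht_disj s hs)
      (by rw [card_insert_of_notMem ht_notMem]; omega)
    exact ⟨𝒯, (subset_insert t 𝒮).trans hsub, h𝒯⟩

end Triples

def BenchCollection.ofTriples (S : Fin q → Finset (Fin n)) (h3 : ∀ i, (S i).card = 3)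
    (hdisj : Pairwise (Disjoint on S)) : BenchCollection n q where
  a i := (S i).orderEmbOfFin (h3 i) 0
  b i := (S i).orderEmbOfFin (h3 i) 1
  c i := (S i).orderEmbOfFin (h3 i) 2
  hab i := (orderEmbOfFin _ _).strictMono (by decide)
  hbc i := (orderEmbOfFin _ _).strictMono (by decide)
  disj i j hij := by
    rw [insert_orderEmbOfFin_three, insert_orderEmbOfFin_three]
    exact hdisj hij

lemma BenchCollection.bench_ofTriples (S : Fin q → Finset (Fin n)) (h3 : ∀ i, (S i).card = 3)
    (hdisj : Pairwise (Disjoint on S)) (i : Fin q) :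
    (BenchCollection.ofTriples S h3 hdisj).bench i = S i :=
  insert_orderEmbOfFin_three (S i) (h3 i)

lemma exists_benchCollection_of_triples {𝒮 : Finset (Finset (Fin n))} (h3 : ∀ s ∈ 𝒮, s.card = 3)
    (hdisj : (𝒮 : Set (Finset (Fin n))).PairwiseDisjoint id) :
    ∃ β : BenchCollection n (n / 3), ∀ s ∈ 𝒮, ∃ i, β.bench i = s := by
  have hcard : 𝒮.card ≤ n / 3 := by
    have := card_le_univ (𝒮.biUnion id)
    rw [card_biUnion_triples h3 hdisj, Fintype.card_fin] at this
    omega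
  obtain ⟨𝒯, hsub, h𝒯, h3', hdisj'⟩ :=
    exists_triples_superset (Nat.mul_div_le n 3) hcard h3 hdisj
  let e := (𝒯.equivFinOfCardEq h𝒯).symm
  refine ⟨.ofTriples (fun i => e i) (fun i => h3' _ (e i).2)
    (fun i j hij => hdisj' (e i).2 (e j).2 fun h => hij (e.injective (Subtype.ext h))),
    fun s hs => ⟨e.symm ⟨s, hsub hs⟩, ?_⟩⟩
  exact (BenchCollection.bench_ofTriples _ _ _ _).trans
    (congrArg Subtype.val (e.apply_symm_apply _))

lemma card_le_balance (σ : Fin n → Bool) (β : BenchCollection n q) {𝒮 : Finset (Finset (Fin n))}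
    (hβ : ∀ s ∈ 𝒮, ∃ i, β.bench i = s)
    (hσ : ∀ s ∈ 𝒮, IsBalancedTriple σ s) :
    𝒮.card ≤ balance σ β := by
  refine card_le_card_of_surjOn β.bench fun s hs => ?_
  obtain ⟨i, rfl⟩ := hβ s hs
  obtain ⟨x, y, z, hxy, hyz, hne, h⟩ := hσ _ hs
  obtain ⟨rfl, rfl⟩ := eq_and_eq_of_triple_eq (β.hab i) (β.hbc i) hxy hyz h
  exact ⟨i, mem_filter.mpr ⟨mem_univ i, balanced_iff.mpr hne⟩, rfl⟩

lemma exists_nuMax_le_balance (σ : Fin n → Bool) :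
    ∃ β : BenchCollection n (n / 3), nuMax σ ≤ balance σ β := by
  obtain ⟨w, -, hw⟩ := exists_mem_eq_sup (univ.filter IsSeating)
    ⟨1, mem_filter.mpr ⟨mem_univ 1, fun _ hi => hi⟩⟩ (nu σ)
  obtain ⟨𝒮, hcard, hdisj, htriples⟩ := exists_balancedTriples σ w
  obtain ⟨β, hβ⟩ :=
    exists_benchCollection_of_triples (fun s hs => (htriples s hs).card_eq) hdisj
  refine ⟨β, ?_⟩
  rw [nuMax, hw, ← hcard]
  exact card_le_balance σ β hβ htriples

theorem statement5_general (n : ℕ) (σ : Fin n → Bool) :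
    (∃ β : BenchCollection n (n / 3), balance σ β = nuMax σ) ∧
    ∀ β : BenchCollection n (n / 3), balance σ β ≤ nuMax σ := by
  obtain ⟨β, hβ⟩ := exists_nuMax_le_balance σ
  exact ⟨⟨β, (balance_le_nuMax σ β).antisymm hβ⟩, balance_le_nuMax σ⟩

/-- `ν_max(σ)` equals the maximum of the balance number `b(β,σ)` over
all bench collections `β`: the maximum is attained and is an upper bound. -/
theorem statement5 (n : ℕ) (hn : 1 ≤ n) (σ : Fin n → Bool) :
    (∃ β : BenchCollection n (n / 3), balance σ β = nuMax σ) ∧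
    ∀ β : BenchCollection n (n / 3), balance σ β ≤ nuMax σ :=
  statement5_general n σ

end Napkin
end

section
/- Fix a positive integer n, write n = 3q + r with q = ⌊n/3⌋, fix σ ∈ {±1}^n, and set h = max(h(σ), h(−σ)). For any nonnegative integer i, if h ≥ q + r + 2i − 1, then every bench collection β has at least i unbalanced benches, so that b(β,σ) ≤ q − i; in particular ν_max(σ) ≤ q − i. -/
namespace Napkin

variable {n q : ℕ}

lemma sign_le_one (b : Bool) : sign b ≤ 1 := by cases b <;> simp [sign]
lemma neg_one_le_sign (b : Bool) : -1 ≤ sign b := by cases b <;> simp [sign]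
lemma sign_not (b : Bool) : sign (!b) = - sign b := by cases b <;> simp [sign]

lemma sum_bound {ι : Type*} [DecidableEq ι] (σ : Fin n → Bool) (s : Finset ι)
    (a b c : ι → Fin n)
    (hab : ∀ i ∈ s, a i < b i) (hbc : ∀ i ∈ s, b i < c i)
    (hdisj : ∀ i ∈ s, ∀ j ∈ s, i ≠ j →
      Disjoint ({a i, b i, c i} : Finset (Fin n)) ({a j, b j, c j} : Finset (Fin n)))
    (hbal : ∀ i ∈ s, sign (σ (a i)) + sign (σ (b i)) = 0) :
    drift σ + 2 * s.card ≤ n := by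
  classical
  set T : ι → Finset (Fin n) := fun i => {a i, b i, c i} with hT
  have hcardT : ∀ i ∈ s, (T i).card = 3 := by
    intro i hi
    have h1 := hab i hi; have h2 := hbc i hi
    rw [hT]
    rw [Finset.card_insert_of_notMem (by simp [(h1.trans h2).ne, h1.ne]),
      Finset.card_insert_of_notMem (by simp [h2.ne]), Finset.card_singleton]
  set U : Finset (Fin n) := s.biUnion T with hU
  have hUcard : U.card = 3 * s.card := by
    rw [hU, Finset.card_biUnion hdisj]
    rw [Finset.sum_congr rfl hcardT, Finset.sum_const, smul_eq_mul, mul_comm]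
  have hUn : 3 * s.card ≤ n := by
    have := Finset.card_le_univ U
    rw [hUcard] at this; simpa using this
  have key : ∀ m : ℕ,
      (∑ j ∈ Finset.univ.filter (fun j : Fin n => (j : ℕ) < m), sign (σ j))
        ≤ (n : ℤ) - 2 * s.card := by
    intro m
    set S : Finset (Fin n) := Finset.univ.filter (fun j : Fin n => (j : ℕ) < m) with hS
    have hsplit : ∑ j ∈ S, sign (σ j)
        = ∑ j ∈ S ∩ U, sign (σ j) + ∑ j ∈ S \ U, sign (σ j) :=
      (Finset.sum_inter_add_sum_sdiff S U _).symm
    have hpd : Set.PairwiseDisjoint (↑s) (fun i => S ∩ T i) := by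
      intro i hi j hj hij
      exact Finset.disjoint_of_subset_left Finset.inter_subset_right
        (Finset.disjoint_of_subset_right Finset.inter_subset_right (hdisj i hi j hj hij))
    have hSU : S ∩ U = s.biUnion (fun i => S ∩ T i) := by
      rw [hU, Finset.inter_biUnion]
    have hbound1 : ∑ j ∈ S ∩ U, sign (σ j) ≤ (s.card : ℤ) := by
      rw [hSU, Finset.sum_biUnion hpd]
      have hone : ∀ i ∈ s, ∑ j ∈ S ∩ T i, sign (σ j) ≤ 1 := by
        intro i hi
        have h1 := hab i hi; have h2 := hbc i hi
        have hST : S ∩ T i = (T i).filter (fun x : Fin n => (x : ℕ) < m) := by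
          ext x; simp [hS, Finset.mem_inter, Finset.mem_filter, and_comm]
        rw [hST, Finset.sum_filter, hT]
        rw [Finset.sum_insert (by simp [(h1.trans h2).ne, h1.ne]),
          Finset.sum_insert (by simp [h2.ne]), Finset.sum_singleton]
        have hs1 := sign_le_one (σ (a i))
        have hs2 := sign_le_one (σ (b i))
        have hs3 := sign_le_one (σ (c i))
        have hbl := hbal i hi
        by_cases hc : ((c i : ℕ) < m)
        · have hbm : ((b i : ℕ) < m) := lt_trans h2 hc
          have ham : ((a i : ℕ) < m) := lt_trans h1 hbm
          simp only [hc, hbm, ham, if_pos]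
          linarith
        · by_cases hb : ((b i : ℕ) < m)
          · have ham : ((a i : ℕ) < m) := lt_trans h1 hb
            simp only [hc, hb, ham, if_pos, if_neg, not_false_iff]
            simp [hbl]
          · by_cases ha : ((a i : ℕ) < m)
            · simp only [hc, hb, ha, if_pos, if_neg, not_false_iff]
              simpa using hs1
            · simp [hc, hb, ha]
      calc ∑ i ∈ s, ∑ j ∈ S ∩ T i, sign (σ j) ≤ ∑ i ∈ s, (1 : ℤ) :=
            Finset.sum_le_sum hone
        _ = (s.card : ℤ) := by simp
    have hbound2 : ∑ j ∈ S \ U, sign (σ j) ≤ ((n : ℤ) - 3 * s.card) := by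
      have hc1 : ∑ j ∈ S \ U, sign (σ j) ≤ ((S \ U).card : ℤ) := by
        have := Finset.sum_le_card_nsmul (S \ U) (fun j => sign (σ j)) 1
          (fun x _ => sign_le_one _)
        simpa using this
      have hc2 : (S \ U).card ≤ n - 3 * s.card := by
        have hsub : S \ U ⊆ Uᶜ := by
          intro x hx
          simp only [Finset.mem_compl]
          exact (Finset.mem_sdiff.mp hx).2
        have := Finset.card_le_card hsub
        rwa [Finset.card_compl, Fintype.card_fin, hUcard] at this
      have : ((S \ U).card : ℤ) ≤ (n : ℤ) - 3 * s.card := by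
        have h3 := hUn; omega
      linarith
    linarith
  have hdr : drift σ ≤ n - 2 * s.card := by
    apply Finset.sup_le
    intro m _
    have := key m
    omega
  omega

section Dyn

variable (σ : Fin n → Bool) (w : Equiv.Perm (Fin n))

def prefN (j : Fin n) : Fin n := if σ j then w.symm j else leftNapkin (w.symm j)
def otherN (j : Fin n) : Fin n := if σ j then leftNapkin (w.symm j) else w.symm j

def stepf (st : Finset (Fin n) × Finset (Fin n)) (j : Fin n) :
    Finset (Fin n) × Finset (Fin n) :=
  if prefN σ w j ∉ st.1 then (insert (prefN σ w j) st.1, st.2)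
  else if otherN σ w j ∉ st.1 then (insert (otherN σ w j) st.1, st.2)
  else (st.1, insert j st.2)

def states (t : ℕ) : Finset (Fin n) × Finset (Fin n) :=
  ((List.finRange n).take t).foldl (stepf σ w) (∅, ∅)

lemma dine_eq_states : dine σ w = states σ w n := by
  rw [states, List.take_of_length_le (by simp)]
  rfl

lemma states_zero : states σ w 0 = (∅, ∅) := rfl

lemma states_of_le {t : ℕ} (h : n ≤ t) : states σ w t = states σ w n := by
  rw [states, states, List.take_of_length_le (by simpa using h),
    List.take_of_length_le (by simp)]

lemma states_succ {t : ℕ} (ht : t < n) :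
    states σ w (t + 1) = stepf σ w (states σ w t) ⟨t, ht⟩ := by
  rw [states, states, List.take_succ]
  simp [List.getElem?_eq_getElem, ht]

lemma stepf_cases (st : Finset (Fin n) × Finset (Fin n)) (j : Fin n) :
    (prefN σ w j ∉ st.1 ∧ stepf σ w st j = (insert (prefN σ w j) st.1, st.2)) ∨
    (prefN σ w j ∈ st.1 ∧ otherN σ w j ∉ st.1 ∧
      stepf σ w st j = (insert (otherN σ w j) st.1, st.2)) ∨
    (prefN σ w j ∈ st.1 ∧ otherN σ w j ∈ st.1 ∧ stepf σ w st j = (st.1, insert j st.2)) := by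
  by_cases h1 : prefN σ w j ∈ st.1
  · by_cases h2 : otherN σ w j ∈ st.1
    · exact Or.inr (Or.inr ⟨h1, h2, by simp [stepf, h1, h2]⟩)
    · exact Or.inr (Or.inl ⟨h1, h2, by simp [stepf, h1, h2]⟩)
  · exact Or.inl ⟨h1, by simp [stepf, h1]⟩

lemma pair_prefN_otherN (j : Fin n) :
    ({prefN σ w j, otherN σ w j} : Finset (Fin n)) = {w.symm j, leftNapkin (w.symm j)} := by
  rw [prefN, otherN]
  by_cases h : σ j <;> simp [h, Finset.pair_comm]

lemma fst_subset_stepf (st : Finset (Fin n) × Finset (Fin n)) (j : Fin n) :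
    st.1 ⊆ (stepf σ w st j).1 := by
  rcases stepf_cases σ w st j with ⟨_, h⟩ | ⟨_, _, h⟩ | ⟨_, _, h⟩ <;>
    simp [h, Finset.subset_insert]

lemma states_mono_fst_le {t t' : ℕ} (h : t ≤ t') (h' : t' ≤ n) :
    (states σ w t).1 ⊆ (states σ w t').1 := by
  induction t' with
  | zero => simp [Nat.le_zero.mp h]
  | succ t' ih =>
    have ht' : t' < n := h'
    rcases Nat.eq_or_lt_of_le h with h0 | h0
    · rw [h0]
    · exact (ih (Nat.lt_succ_iff.mp h0) (le_of_lt ht')).trans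
        (by rw [states_succ σ w ht']; exact fst_subset_stepf σ w _ _)

lemma states_mono_fst {t t' : ℕ} (h : t ≤ t') :
    (states σ w t).1 ⊆ (states σ w t').1 := by
  rcases le_or_gt t' n with h' | h'
  · exact states_mono_fst_le σ w h h'
  · rw [states_of_le σ w (le_of_lt h')]
    rcases le_or_gt t n with h2 | h2
    · exact states_mono_fst_le σ w h2 (le_refl n)
    · rw [states_of_le σ w (le_of_lt h2)]

lemma mem_snd_lt {t : ℕ} (ht : t ≤ n) {j : Fin n} (hj : j ∈ (states σ w t).2) :
    (j : ℕ) < t := by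
  induction t with
  | zero => simp [states_zero] at hj
  | succ t ih =>
    have ht' : t < n := ht
    rw [states_succ σ w ht'] at hj
    rcases stepf_cases σ w (states σ w t) ⟨t, ht'⟩ with ⟨_, h⟩ | ⟨_, _, h⟩ | ⟨_, _, h⟩ <;>
      rw [h] at hj
    · exact Nat.lt_succ_of_lt (ih (le_of_lt ht') hj)
    · exact Nat.lt_succ_of_lt (ih (le_of_lt ht') hj)
    · rcases Finset.mem_insert.mp hj with h' | h'
      · rw [h']; exact Nat.lt_succ_self t
      · exact Nat.lt_succ_of_lt (ih (le_of_lt ht') h')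

def Claims (j x : Fin n) : Prop :=
  x ∉ (states σ w (j : ℕ)).1 ∧ x ∈ (states σ w ((j : ℕ) + 1)).1

lemma exists_claimer {t : ℕ} (ht : t ≤ n) {x : Fin n} (hx : x ∈ (states σ w t).1) :
    ∃ j : Fin n, (j : ℕ) < t ∧ Claims σ w j x := by
  induction t with
  | zero => simp [states_zero] at hx
  | succ t ih =>
    have ht' : t < n := ht
    by_cases h : x ∈ (states σ w t).1
    · obtain ⟨j, h1, h2⟩ := ih (le_of_lt ht') h
      exact ⟨j, Nat.lt_succ_of_lt h1, h2⟩
    · exact ⟨⟨t, ht'⟩, Nat.lt_succ_self t, h, hx⟩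

lemma claims_lt_of_mem {j x : Fin n} (h : Claims σ w j x) {t : ℕ}
    (hx : x ∈ (states σ w t).1) : (j : ℕ) < t := by
  by_contra h'
  push_neg at h'
  exact h.1 (states_mono_fst σ w h' hx)

lemma claims_mem_final {j x : Fin n} (h : Claims σ w j x) : x ∈ (states σ w n).1 :=
  states_mono_fst σ w j.isLt h.2

lemma claims_unique {j j' x : Fin n} (h : Claims σ w j x) (h' : Claims σ w j' x) :
    j = j' := by
  have h1 : (j : ℕ) < (j' : ℕ) + 1 := claims_lt_of_mem σ w h h'.2
  have h2 : (j' : ℕ) < (j : ℕ) + 1 := claims_lt_of_mem σ w h' h.2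
  exact Fin.ext (by omega)

lemma claims_seat {j x : Fin n} (h : Claims σ w j x) :
    x = w.symm j ∨ x = leftNapkin (w.symm j) := by
  have hjn : (j : ℕ) < n := j.isLt
  have hs := states_succ σ w hjn
  rw [Fin.eta] at hs
  obtain ⟨hx1, hx2⟩ := h
  rw [hs] at hx2
  have hmem : x ∈ ({prefN σ w j, otherN σ w j} : Finset (Fin n)) := by
    rcases stepf_cases σ w (states σ w (j : ℕ)) j with ⟨_, he⟩ | ⟨_, _, he⟩ | ⟨_, _, he⟩ <;>
      rw [he] at hx2
    · rcases Finset.mem_insert.mp hx2 with h' | h'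
      · simp [h']
      · exact absurd h' hx1
    · rcases Finset.mem_insert.mp hx2 with h' | h'
      · simp [h']
      · exact absurd h' hx1
    · exact absurd hx2 hx1
  rw [pair_prefN_otherN] at hmem
  simpa using hmem

lemma claims_left_reason {j x : Fin n} (h : Claims σ w j x) (hx : x ≠ w.symm j) :
    σ j = false ∨ w.symm j ∈ (states σ w (j : ℕ)).1 := by
  by_cases hσ : σ j
  · right
    have hjn : (j : ℕ) < n := j.isLt
    have hs := states_succ σ w hjn
    rw [Fin.eta] at hs
    obtain ⟨hx1, hx2⟩ := h
    rw [hs] at hx2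
    have hpref : prefN σ w j = w.symm j := by simp [prefN, hσ]
    rcases stepf_cases σ w (states σ w (j : ℕ)) j with ⟨_, he⟩ | ⟨hp, _, he⟩ | ⟨_, _, he⟩ <;>
      rw [he] at hx2
    · rcases Finset.mem_insert.mp hx2 with h' | h'
      · rw [hpref] at h'; exact absurd h' hx
      · exact absurd h' hx1
    · rwa [hpref] at hp
    · exact absurd hx2 hx1
  · exact Or.inl (by simpa using hσ)

lemma claims_right_reason {j x : Fin n} (h : Claims σ w j x)
    (hx : x ≠ leftNapkin (w.symm j)) :
    σ j = true ∨ leftNapkin (w.symm j) ∈ (states σ w (j : ℕ)).1 := by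
  by_cases hσ : σ j
  · exact Or.inl (by simpa using hσ)
  · right
    have hjn : (j : ℕ) < n := j.isLt
    have hs := states_succ σ w hjn
    rw [Fin.eta] at hs
    obtain ⟨hx1, hx2⟩ := h
    rw [hs] at hx2
    have hpref : prefN σ w j = leftNapkin (w.symm j) := by simp [prefN, hσ]
    rcases stepf_cases σ w (states σ w (j : ℕ)) j with ⟨_, he⟩ | ⟨hp, _, he⟩ | ⟨_, _, he⟩ <;>
      rw [he] at hx2
    · rcases Finset.mem_insert.mp hx2 with h' | h'
      · rw [hpref] at h'; exact absurd h' hx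
      · exact absurd h' hx1
    · rwa [hpref] at hp
    · exact absurd hx2 hx1

lemma snd_eq_of_claims {j x : Fin n} (h : Claims σ w j x) :
    (states σ w ((j : ℕ) + 1)).2 = (states σ w (j : ℕ)).2 := by
  have hjn : (j : ℕ) < n := j.isLt
  have hs := states_succ σ w hjn
  rw [Fin.eta] at hs
  obtain ⟨hx1, hx2⟩ := h
  rw [hs] at hx2 ⊢
  rcases stepf_cases σ w (states σ w (j : ℕ)) j with ⟨_, he⟩ | ⟨_, _, he⟩ | ⟨_, _, he⟩ <;>
    rw [he] at hx2 ⊢ <;> try rfl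
  exact absurd hx2 hx1

lemma mem_snd_self {t : ℕ} (ht : t ≤ n) {j : Fin n} (hj : j ∈ (states σ w t).2) :
    j ∈ (states σ w ((j : ℕ) + 1)).2 := by
  induction t with
  | zero => simp [states_zero] at hj
  | succ t ih =>
    have ht' : t < n := ht
    rw [states_succ σ w ht'] at hj
    rcases stepf_cases σ w (states σ w t) ⟨t, ht'⟩ with ⟨_, he⟩ | ⟨_, _, he⟩ | ⟨_, _, he⟩ <;>
      rw [he] at hj
    · exact ih (le_of_lt ht') hj
    · exact ih (le_of_lt ht') hj
    · rcases Finset.mem_insert.mp hj with h' | h'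
      · subst h'
        rw [states_succ σ w ht', he]
        exact Finset.mem_insert_self _ _
      · exact ih (le_of_lt ht') h'

lemma napkinless_no_claims {j : Fin n} (hj : j ∈ (states σ w n).2) {x : Fin n} :
    ¬ Claims σ w j x := by
  intro h
  have h1 := mem_snd_self σ w (le_refl n) hj
  rw [snd_eq_of_claims σ w h] at h1
  exact absurd (mem_snd_lt σ w (le_of_lt j.isLt) h1) (lt_irrefl _)

lemma napkinless_taken {j : Fin n} (hj : j ∈ (states σ w n).2) :
    w.symm j ∈ (states σ w (j : ℕ)).1 ∧
      leftNapkin (w.symm j) ∈ (states σ w (j : ℕ)).1 := by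
  have h1 := mem_snd_self σ w (le_refl n) hj
  have hjn : (j : ℕ) < n := j.isLt
  have hs := states_succ σ w hjn
  rw [Fin.eta] at hs
  rw [hs] at h1
  have hnotyet : j ∉ (states σ w (j : ℕ)).2 := fun h =>
    absurd (mem_snd_lt σ w (le_of_lt hjn) h) (lt_irrefl _)
  rcases stepf_cases σ w (states σ w (j : ℕ)) j with ⟨_, he⟩ | ⟨_, _, he⟩ | ⟨hp, ho, he⟩ <;>
    rw [he] at h1
  · exact absurd h1 hnotyet
  · exact absurd h1 hnotyet
  · have hmem : ∀ y ∈ ({prefN σ w j, otherN σ w j} : Finset (Fin n)),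
        y ∈ (states σ w (j : ℕ)).1 := by
      intro y hy
      rcases Finset.mem_insert.mp hy with h' | h'
      · rwa [h']
      · rw [Finset.mem_singleton.mp h']; exact ho
    rw [pair_prefN_otherN] at hmem
    exact ⟨hmem _ (Finset.mem_insert_self _ _),
      hmem _ (Finset.mem_insert_of_mem (Finset.mem_singleton_self _))⟩

end Dyn

def fsucc (s : Fin n) : Fin n := ⟨((s : ℕ) + 1) % n, Nat.mod_lt _ s.pos⟩

lemma leftNapkin_fsucc (s : Fin n) : leftNapkin (fsucc s) = s := by
  have hn : 0 < n := s.pos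
  apply Fin.ext
  show ((((s : ℕ) + 1) % n) + (n - 1)) % n = (s : ℕ)
  rw [Nat.mod_add_mod]
  have h1 : (s : ℕ) + 1 + (n - 1) = (s : ℕ) + n := by omega
  rw [h1, Nat.add_mod_right, Nat.mod_eq_of_lt s.isLt]

lemma fsucc_leftNapkin (s : Fin n) : fsucc (leftNapkin s) = s := by
  have hn : 0 < n := s.pos
  apply Fin.ext
  show ((((s : ℕ) + (n - 1)) % n) + 1) % n = (s : ℕ)
  rw [Nat.mod_add_mod]
  have h1 : (s : ℕ) + (n - 1) + 1 = (s : ℕ) + n := by omega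
  rw [h1, Nat.add_mod_right, Nat.mod_eq_of_lt s.isLt]

lemma fsucc_injective : Function.Injective (fsucc : Fin n → Fin n) :=
  Function.LeftInverse.injective leftNapkin_fsucc

lemma leftNapkin_injective : Function.Injective (leftNapkin : Fin n → Fin n) :=
  Function.LeftInverse.injective fsucc_leftNapkin

lemma fsucc_ne_self (hn2 : 2 ≤ n) (s : Fin n) : fsucc s ≠ s := by
  intro h
  have hv : ((s : ℕ) + 1) % n = (s : ℕ) := congrArg Fin.val h
  have hlt := s.isLt
  rcases Nat.lt_or_ge ((s : ℕ) + 1) n with h' | h'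
  · rw [Nat.mod_eq_of_lt h'] at hv; omega
  · have : (s : ℕ) + 1 = n := by omega
    rw [this, Nat.mod_self] at hv
    omega

lemma leftNapkin_ne_self (hn2 : 2 ≤ n) (s : Fin n) : leftNapkin s ≠ s := by
  intro h
  exact fsucc_ne_self hn2 s (by nth_rewrite 1 [← h]; exact fsucc_leftNapkin s)

section Chains

variable (σ : Fin n → Bool) (w : Equiv.Perm (Fin n))

lemma chainR (hn2 : 2 ≤ n) :
    ∀ m : ℕ, ∀ j₁ s : Fin n, (j₁ : ℕ) = m → w.symm j₁ = fsucc s → Claims σ w j₁ s →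
    ∃ k : ℕ, 1 ≤ k ∧ σ (w (fsucc^[k] s)) = false ∧
      ((w (fsucc^[k] s) : Fin n) : ℕ) ≤ (j₁ : ℕ) ∧
      ∀ t : ℕ, 1 ≤ t → t ≤ k → Claims σ w (w (fsucc^[t] s)) (fsucc^[t - 1] s) := by
  intro m
  induction m using Nat.strong_induction_on with
  | _ m IH =>
    intro j₁ s hm hseat hcl
    have hw1 : w (fsucc s) = j₁ := by rw [← hseat]; exact w.apply_symm_apply j₁
    by_cases hσ : σ j₁ = false
    · refine ⟨1, le_rfl, ?_, ?_, ?_⟩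
      · simpa [hw1] using hσ
      · simp [hw1]
      · intro t h1 h2
        have : t = 1 := le_antisymm h2 h1
        subst this
        simpa [hw1] using hcl
    · have hσ' : σ j₁ = true := by simpa using hσ
      have hne : s ≠ w.symm j₁ := by
        rw [hseat]; exact fun h => fsucc_ne_self hn2 s h.symm
      rcases claims_left_reason σ w hcl hne with h | h
      · rw [hσ'] at h; exact absurd h (by simp)
      · rw [hseat] at h
        obtain ⟨j₂, hj₂lt, hj₂⟩ := exists_claimer σ w (le_of_lt j₁.isLt) h
        rcases claims_seat σ w hj₂ with h2 | h2
        · exfalso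
          have : j₂ = j₁ := w.symm.injective (by rw [h2.symm, hseat])
          rw [this] at hj₂lt
          exact lt_irrefl _ hj₂lt
        · have hseat2 : w.symm j₂ = fsucc (fsucc s) := by
            rw [← fsucc_leftNapkin (w.symm j₂), ← h2]
          obtain ⟨k, hk1, hkσ, hkle, hkcl⟩ :=
            IH (j₂ : ℕ) (by omega) j₂ (fsucc s) rfl hseat2 hj₂
          refine ⟨k + 1, by omega, ?_, ?_, ?_⟩
          · rwa [Function.iterate_succ_apply]
          · rw [Function.iterate_succ_apply]; omega
          · intro t h1 h2
            rcases Nat.eq_or_lt_of_le h1 with h1' | h1'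
            · rw [← h1']
              simpa [hw1] using hcl
            · have e1 : fsucc^[t] s = fsucc^[t - 1] (fsucc s) := by
                rw [← Function.iterate_succ_apply]
                congr 1; omega
              have e2 : fsucc^[t - 1] s = fsucc^[t - 1 - 1] (fsucc s) := by
                rw [← Function.iterate_succ_apply]
                congr 1; omega
              rw [e1, e2]
              exact hkcl (t - 1) (by omega) (by omega)

lemma chainL (hn2 : 2 ≤ n) :
    ∀ m : ℕ, ∀ j₁ s : Fin n, (j₁ : ℕ) = m → w.symm j₁ = leftNapkin s →
      Claims σ w j₁ (leftNapkin s) →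
    ∃ k : ℕ, 1 ≤ k ∧ σ (w (leftNapkin^[k] s)) = true ∧
      ((w (leftNapkin^[k] s) : Fin n) : ℕ) ≤ (j₁ : ℕ) ∧
      ∀ t : ℕ, 1 ≤ t → t ≤ k → Claims σ w (w (leftNapkin^[t] s)) (leftNapkin^[t] s) := by
  intro m
  induction m using Nat.strong_induction_on with
  | _ m IH =>
    intro j₁ s hm hseat hcl
    have hw1 : w (leftNapkin s) = j₁ := by rw [← hseat]; exact w.apply_symm_apply j₁
    by_cases hσ : σ j₁ = true
    · refine ⟨1, le_rfl, ?_, ?_, ?_⟩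
      · simpa [hw1] using hσ
      · simp [hw1]
      · intro t h1 h2
        have : t = 1 := le_antisymm h2 h1
        subst this
        simpa [hw1] using hcl
    · have hσ' : σ j₁ = false := by simpa using hσ
      have hne : leftNapkin s ≠ leftNapkin (w.symm j₁) := by
        rw [hseat]
        intro h
        exact leftNapkin_ne_self hn2 s (leftNapkin_injective h.symm)
      rcases claims_right_reason σ w hcl hne with h | h
      · rw [hσ'] at h; exact absurd h (by simp)
      · rw [hseat] at h
        obtain ⟨j₂, hj₂lt, hj₂⟩ := exists_claimer σ w (le_of_lt j₁.isLt) h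
        rcases claims_seat σ w hj₂ with h2 | h2
        · have hseat2 : w.symm j₂ = leftNapkin (leftNapkin s) := h2.symm
          obtain ⟨k, hk1, hkσ, hkle, hkcl⟩ :=
            IH (j₂ : ℕ) (by omega) j₂ (leftNapkin s) rfl hseat2 hj₂
          refine ⟨k + 1, by omega, ?_, ?_, ?_⟩
          · rwa [Function.iterate_succ_apply]
          · rw [Function.iterate_succ_apply]; omega
          · intro t h1 h2'
            rcases Nat.eq_or_lt_of_le h1 with h1' | h1'
            · rw [← h1']
              simpa [hw1] using hcl
            · have e1 : leftNapkin^[t] s = leftNapkin^[t - 1] (leftNapkin s) := by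
                rw [← Function.iterate_succ_apply]
                congr 1; omega
              rw [e1]
              exact hkcl (t - 1) (by omega) (by omega)
        · exfalso
          have he : w.symm j₂ = leftNapkin s := (leftNapkin_injective h2).symm
          have : j₂ = j₁ := w.symm.injective (by rw [he, hseat])
          subst this
          exact lt_irrefl _ hj₂lt

end Chains



section Harvest

variable (σ : Fin n → Bool) (w : Equiv.Perm (Fin n))

lemma exists_bench :
    ∃ a b : Fin n → Fin n,
      (∀ j ∈ (states σ w n).2, a j < b j) ∧
      (∀ j ∈ (states σ w n).2, b j < j) ∧
      (∀ j ∈ (states σ w n).2, ∀ j' ∈ (states σ w n).2, j ≠ j' →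
        Disjoint ({a j, b j, j} : Finset (Fin n)) ({a j', b j', j'} : Finset (Fin n))) ∧
      (∀ j ∈ (states σ w n).2, sign (σ (a j)) + sign (σ (b j)) = 0) := by
  classical
  by_cases hn2 : 2 ≤ n
  swap
  · have hempty : ∀ j : Fin n, j ∉ (states σ w n).2 := by
      intro j hj
      have h1 : 0 < n := j.pos
      have hn1 : n = 1 := by omega
      have hjv : (j : ℕ) = 0 := by have := j.isLt; omega
      have := (napkinless_taken σ w hj).1
      rw [hjv, states_zero] at this
      simp at this
    exact ⟨id, id, fun j hj => absurd hj (hempty j), fun j hj => absurd hj (hempty j),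
      fun j hj => absurd hj (hempty j), fun j hj => absurd hj (hempty j)⟩
  · have hRex : ∀ j : Fin n, ∃ k : ℕ, j ∈ (states σ w n).2 →
        (1 ≤ k ∧ σ (w (fsucc^[k] (w.symm j))) = false ∧
          ((w (fsucc^[k] (w.symm j)) : Fin n) : ℕ) < (j : ℕ) ∧
          ∀ t : ℕ, 1 ≤ t → t ≤ k →
            Claims σ w (w (fsucc^[t] (w.symm j))) (fsucc^[t - 1] (w.symm j))) := by
      intro j
      by_cases hj : j ∈ (states σ w n).2
      swap
      · exact ⟨0, fun h => absurd h hj⟩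
      · have hr := (napkinless_taken σ w hj).1
        obtain ⟨j₁, hj₁lt, hj₁⟩ := exists_claimer σ w (le_of_lt j.isLt) hr
        rcases claims_seat σ w hj₁ with h1 | h1
        · exfalso
          have : j = j₁ := w.symm.injective h1
          subst this
          exact lt_irrefl _ hj₁lt
        · have hseat : w.symm j₁ = fsucc (w.symm j) := by
            rw [h1, fsucc_leftNapkin]
          obtain ⟨k, hk1, hkσ, hkle, hkcl⟩ :=
            chainR σ w hn2 (j₁ : ℕ) j₁ (w.symm j) rfl hseat hj₁
          exact ⟨k, fun _ => ⟨hk1, hkσ, by omega, hkcl⟩⟩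
    have hLex : ∀ j : Fin n, ∃ k : ℕ, j ∈ (states σ w n).2 →
        (1 ≤ k ∧ σ (w (leftNapkin^[k] (w.symm j))) = true ∧
          ((w (leftNapkin^[k] (w.symm j)) : Fin n) : ℕ) < (j : ℕ) ∧
          ∀ t : ℕ, 1 ≤ t → t ≤ k →
            Claims σ w (w (leftNapkin^[t] (w.symm j))) (leftNapkin^[t] (w.symm j))) := by
      intro j
      by_cases hj : j ∈ (states σ w n).2
      swap
      · exact ⟨0, fun h => absurd h hj⟩
      · have hl := (napkinless_taken σ w hj).2
        obtain ⟨j₁, hj₁lt, hj₁⟩ := exists_claimer σ w (le_of_lt j.isLt) hl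
        rcases claims_seat σ w hj₁ with h1 | h1
        · have hseat : w.symm j₁ = leftNapkin (w.symm j) := h1.symm
          obtain ⟨k, hk1, hkσ, hkle, hkcl⟩ :=
            chainL σ w hn2 (j₁ : ℕ) j₁ (w.symm j) rfl hseat hj₁
          exact ⟨k, fun _ => ⟨hk1, hkσ, by omega, hkcl⟩⟩
        · exfalso
          have : j = j₁ := w.symm.injective (leftNapkin_injective h1)
          subst this
          exact lt_irrefl _ hj₁lt
    choose kR hkR using hRex
    choose kL hkL using hLex
    have hRnotN : ∀ j ∈ (states σ w n).2, w (fsucc^[kR j] (w.symm j)) ∉ (states σ w n).2 := by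
      intro j hj h
      exact napkinless_no_claims σ w h
        ((hkR j hj).2.2.2 (kR j) (hkR j hj).1 le_rfl)
    have hLnotN : ∀ j ∈ (states σ w n).2,
        w (leftNapkin^[kL j] (w.symm j)) ∉ (states σ w n).2 := by
      intro j hj h
      exact napkinless_no_claims σ w h
        ((hkL j hj).2.2.2 (kL j) (hkL j hj).1 le_rfl)
    have hRaux : ∀ j ∈ (states σ w n).2, ∀ j' ∈ (states σ w n).2, kR j ≤ kR j' →
        w (fsucc^[kR j] (w.symm j)) = w (fsucc^[kR j'] (w.symm j')) → j = j' := by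
      intro j hj j' hj' hkk heq
      have he : fsucc^[kR j] (w.symm j) = fsucc^[kR j'] (w.symm j') := w.injective heq
      have he2 : fsucc^[kR j] (w.symm j)
          = fsucc^[kR j] (fsucc^[kR j' - kR j] (w.symm j')) := by
        rw [← Function.iterate_add_apply, he]
        congr 1
        omega
      have he3 : w.symm j = fsucc^[kR j' - kR j] (w.symm j') :=
        (fsucc_injective.iterate (kR j)) he2
      rcases Nat.eq_zero_or_pos (kR j' - kR j) with hd0 | hd0
      · rw [hd0] at he3
        simp only [Function.iterate_zero, id_eq] at he3
        exact w.symm.injective he3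
      · exfalso
        have hcl := (hkR j' hj').2.2.2 (kR j' - kR j) hd0 (by omega)
        rw [← he3, Equiv.apply_symm_apply] at hcl
        exact napkinless_no_claims σ w hj hcl
    have hLaux : ∀ j ∈ (states σ w n).2, ∀ j' ∈ (states σ w n).2, kL j ≤ kL j' →
        w (leftNapkin^[kL j] (w.symm j)) = w (leftNapkin^[kL j'] (w.symm j')) → j = j' := by
      intro j hj j' hj' hkk heq
      have he : leftNapkin^[kL j] (w.symm j) = leftNapkin^[kL j'] (w.symm j') :=
        w.injective heq
      have he2 : leftNapkin^[kL j] (w.symm j)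
          = leftNapkin^[kL j] (leftNapkin^[kL j' - kL j] (w.symm j')) := by
        rw [← Function.iterate_add_apply, he]
        congr 1
        omega
      have he3 : w.symm j = leftNapkin^[kL j' - kL j] (w.symm j') :=
        (leftNapkin_injective.iterate (kL j)) he2
      rcases Nat.eq_zero_or_pos (kL j' - kL j) with hd0 | hd0
      · rw [hd0] at he3
        simp only [Function.iterate_zero, id_eq] at he3
        exact w.symm.injective he3
      · exfalso
        have hcl := (hkL j' hj').2.2.2 (kL j' - kL j) hd0 (by omega)
        rw [← he3, Equiv.apply_symm_apply] at hcl
        exact napkinless_no_claims σ w hj hcl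
    have hRinj : ∀ j ∈ (states σ w n).2, ∀ j' ∈ (states σ w n).2,
        w (fsucc^[kR j] (w.symm j)) = w (fsucc^[kR j'] (w.symm j')) → j = j' := by
      intro j hj j' hj' heq
      rcases le_total (kR j) (kR j') with h | h
      · exact hRaux j hj j' hj' h heq
      · exact (hRaux j' hj' j hj h heq.symm).symm
    have hLinj : ∀ j ∈ (states σ w n).2, ∀ j' ∈ (states σ w n).2,
        w (leftNapkin^[kL j] (w.symm j)) = w (leftNapkin^[kL j'] (w.symm j')) → j = j' := by
      intro j hj j' hj' heq
      rcases le_total (kL j) (kL j') with h | h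
      · exact hLaux j hj j' hj' h heq
      · exact (hLaux j' hj' j hj h heq.symm).symm
    have hcross : ∀ j ∈ (states σ w n).2, ∀ j' ∈ (states σ w n).2,
        w (leftNapkin^[kL j] (w.symm j)) ≠ w (fsucc^[kR j'] (w.symm j')) := by
      intro j hj j' hj' h
      have h1 := (hkL j hj).2.1
      have h2 := (hkR j' hj').2.1
      rw [h] at h1
      rw [h1] at h2
      exact Bool.noConfusion h2
    refine ⟨fun j => if w (leftNapkin^[kL j] (w.symm j)) ≤ w (fsucc^[kR j] (w.symm j))
        then w (leftNapkin^[kL j] (w.symm j)) else w (fsucc^[kR j] (w.symm j)),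
      fun j => if w (leftNapkin^[kL j] (w.symm j)) ≤ w (fsucc^[kR j] (w.symm j))
        then w (fsucc^[kR j] (w.symm j)) else w (leftNapkin^[kL j] (w.symm j)),
      ?_, ?_, ?_, ?_⟩
    · intro j hj
      by_cases h : w (leftNapkin^[kL j] (w.symm j)) ≤ w (fsucc^[kR j] (w.symm j))
      · simp only [if_pos h]
        exact lt_of_le_of_ne h (hcross j hj j hj)
      · simp only [if_neg h]
        exact not_le.mp h
    · intro j hj
      have h1 : w (leftNapkin^[kL j] (w.symm j)) < j := by
        rw [Fin.lt_def]; exact (hkL j hj).2.2.1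
      have h2 : w (fsucc^[kR j] (w.symm j)) < j := by
        rw [Fin.lt_def]; exact (hkR j hj).2.2.1
      by_cases h : w (leftNapkin^[kL j] (w.symm j)) ≤ w (fsucc^[kR j] (w.symm j))
      · simp only [if_pos h]; exact h2
      · simp only [if_neg h]; exact h1
    · intro j hj j' hj' hne
      have hsets : ∀ jj : Fin n,
          ({(if w (leftNapkin^[kL jj] (w.symm jj)) ≤ w (fsucc^[kR jj] (w.symm jj))
              then w (leftNapkin^[kL jj] (w.symm jj)) else w (fsucc^[kR jj] (w.symm jj))),
            (if w (leftNapkin^[kL jj] (w.symm jj)) ≤ w (fsucc^[kR jj] (w.symm jj))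
              then w (fsucc^[kR jj] (w.symm jj)) else w (leftNapkin^[kL jj] (w.symm jj))), jj}
            : Finset (Fin n))
          = {w (leftNapkin^[kL jj] (w.symm jj)), w (fsucc^[kR jj] (w.symm jj)), jj} := by
        intro jj
        by_cases h : w (leftNapkin^[kL jj] (w.symm jj)) ≤ w (fsucc^[kR jj] (w.symm jj))
        · simp only [if_pos h]
        · simp only [if_neg h, Finset.insert_comm]
      rw [hsets j, hsets j']
      have hLL : w (leftNapkin^[kL j] (w.symm j)) ≠ w (leftNapkin^[kL j'] (w.symm j')) :=
        fun h => hne (hLinj j hj j' hj' h)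
      have hRR : w (fsucc^[kR j] (w.symm j)) ≠ w (fsucc^[kR j'] (w.symm j')) :=
        fun h => hne (hRinj j hj j' hj' h)
      have hLR : w (leftNapkin^[kL j] (w.symm j)) ≠ w (fsucc^[kR j'] (w.symm j')) :=
        hcross j hj j' hj'
      have hRL : w (fsucc^[kR j] (w.symm j)) ≠ w (leftNapkin^[kL j'] (w.symm j')) :=
        fun h => hcross j' hj' j hj h.symm
      have hLj' : w (leftNapkin^[kL j] (w.symm j)) ≠ j' :=
        fun h => hLnotN j hj (h ▸ hj')
      have hRj' : w (fsucc^[kR j] (w.symm j)) ≠ j' :=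
        fun h => hRnotN j hj (h ▸ hj')
      have hjL : j ≠ w (leftNapkin^[kL j'] (w.symm j')) :=
        fun h => hLnotN j' hj' (h ▸ hj)
      have hjR : j ≠ w (fsucc^[kR j'] (w.symm j')) :=
        fun h => hRnotN j' hj' (h ▸ hj)
      rw [Finset.disjoint_left]
      intro x hx hx'
      simp only [Finset.mem_insert, Finset.mem_singleton] at hx hx'
      rcases hx with h | h | h <;> rcases hx' with h' | h' | h' <;> subst h <;>
        first
          | exact hLL h' | exact hLR h' | exact hLj' h'
          | exact hRL h' | exact hRR h' | exact hRj' h'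
          | exact hjL h' | exact hjR h' | exact hne h'
    · intro j hj
      have h1 := (hkL j hj).2.1
      have h2 := (hkR j hj).2.1
      by_cases h : w (leftNapkin^[kL j] (w.symm j)) ≤ w (fsucc^[kR j] (w.symm j))
      · simp only [if_pos h]
        simp [sign, h1, h2]
      · simp only [if_neg h]
        simp [sign, h1, h2]

end Harvest

lemma nu_le (σ : Fin n → Bool) (w : Equiv.Perm (Fin n)) :
    drift σ + 2 * nu σ w ≤ n ∧ drift (fun j => !σ j) + 2 * nu σ w ≤ n := by
  obtain ⟨a, b, h1, h2, h3, h4⟩ := exists_bench σ w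
  have hnu : nu σ w = ((states σ w n).2).card := by
    rw [nu, napkinless, dine_eq_states]
  constructor
  · rw [hnu]
    exact sum_bound σ ((states σ w n).2) a b id h1 h2 h3 h4
  · rw [hnu]
    refine sum_bound _ ((states σ w n).2) a b id h1 h2 h3 ?_
    intro j hj
    rw [sign_not, sign_not]
    have := h4 j hj
    omega

lemma drift_le (σ : Fin n → Bool) : drift σ ≤ n := by
  have := sum_bound σ (∅ : Finset (Fin n)) id id id (by simp) (by simp) (by simp) (by simp)
  simpa using this


/-- Write `n = 3q + r` with `q = ⌊n/3⌋`, and let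
`h = max(h(σ), h(-σ))`.  If `h ≥ q + r + 2i - 1` then every bench collection has at
least `i` unbalanced benches, hence `b(β,σ) ≤ q - i`, and in particular
`ν_max(σ) ≤ q - i`. -/
theorem statement6 (n q r : ℕ) (hn : 1 ≤ n) (hq : q = n / 3) (hnr : n = 3 * q + r)
    (σ : Fin n → Bool) (h : ℕ) (hmax : h = max (drift σ) (drift fun j => !σ j))
    (i : ℕ) (hi : (q : ℤ) + r + 2 * i - 1 ≤ h) :
    ∀ β : BenchCollection n q,
      i ≤ (Finset.univ.filter fun k : Fin q => ¬Balanced σ β k).card ∧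
      balance σ β + i ≤ q ∧ nuMax σ + i ≤ q := by
  intro β
  have hcardq : (Finset.univ : Finset (Fin q)).card = q := by simp
  have hb1 : drift σ + 2 * balance σ β ≤ n := by
    have := sum_bound σ (Finset.univ.filter fun k : Fin q => Balanced σ β k) β.a β.b β.c
      (fun k _ => β.hab k) (fun k _ => β.hbc k) (fun k _ l _ hkl => β.disj k l hkl)
      (fun k hk => (Finset.mem_filter.mp hk).2)
    simpa [balance] using this
  have hb2 : drift (fun j => !σ j) + 2 * balance σ β ≤ n := by
    have := sum_bound (fun j => !σ j) (Finset.univ.filter fun k : Fin q => Balanced σ β k)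
      β.a β.b β.c
      (fun k _ => β.hab k) (fun k _ => β.hbc k) (fun k _ l _ hkl => β.disj k l hkl)
      (fun k hk => by
        have hbk : sign (σ (β.a k)) + sign (σ (β.b k)) = 0 := (Finset.mem_filter.mp hk).2
        rw [sign_not, sign_not]
        omega)
    simpa [balance] using this
  have hd1 : drift σ ≤ n := drift_le σ
  have hd2 : drift (fun j => !σ j) ≤ n := drift_le _
  have hhn : h ≤ n := by
    rw [hmax]
    rcases max_choice (drift σ) (drift fun j => !σ j) with hc | hc <;> rw [hc] <;> omega
  have hhb : h + 2 * balance σ β ≤ n := by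
    rw [hmax]
    rcases max_choice (drift σ) (drift fun j => !σ j) with hc | hc <;> rw [hc] <;> omega
  have hiq : i ≤ q := by omega
  have hbalq : balance σ β + i ≤ q := by omega
  have hcard := Finset.card_filter_add_card_filter_not
    (s := (Finset.univ : Finset (Fin q))) (p := fun k => Balanced σ β k)
  rw [hcardq] at hcard
  have hbal_eq : balance σ β = (Finset.univ.filter fun k : Fin q => Balanced σ β k).card := rfl
  refine ⟨by omega, hbalq, ?_⟩
  have hνall : ∀ w' : Equiv.Perm (Fin n), nu σ w' + i ≤ q := by
    intro w'
    obtain ⟨k1, k2⟩ := nu_le σ w'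
    have hh : h + 2 * nu σ w' ≤ n := by
      rw [hmax]
      rcases max_choice (drift σ) (drift fun j => !σ j) with hc | hc <;> rw [hc] <;> omega
    omega
  have hsup : nuMax σ ≤ q - i :=
    Finset.sup_le (fun w' _ => by have := hνall w'; omega)
  omega


end Napkin
end
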